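/- The tensor element E(x,y,z) = y ⊗ e^{−x} + 2πi ⊗ e^{−(z−xy)/(2πi)} ∈ ℂ ⊗_ℤ ℂ* is invariant under the transformation (x,y,z) ↦ (x + m₁, y + n₁, z + m₁y + m₂) with m₁, n₁ ∈ 2πiℤ and m₂ ∈ (2πi)²ℤ. -/

import Mathlib

/-!
Write `n₁ = 2πi·k`. The first term only changes by `n₁ ⊗ e^{-x}`, since `e^{-x}` is
`2πi`-periodic. The exponent of the second term changes by `k·x` modulo `2πiℤ`, so that term
changes by `2πi ⊗ e^{k x} = n₁ ⊗ e^{x}`, which cancels the first change.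
-/

open TensorProduct

noncomputable section

/-- `2πi`. -/
def twoPiI : ℂ := 2 * Real.pi * Complex.I

/-- `exp w` as a unit of `ℂ`. -/
def expUnit (w : ℂ) : ℂˣ := Units.mk0 (Complex.exp w) (Complex.exp_ne_zero w)

/-- The extension class `E(x,y,z) = y ⊗ e^{−x} + 2πi ⊗ e^{−(z−xy)/(2πi)}`
in `ℂ ⊗_ℤ ℂ*` (equation (38) of the paper), with `ℂ*` written additively. -/
def extClass (x y z : ℂ) : ℂ ⊗[ℤ] Additive ℂˣ :=
  y ⊗ₜ[ℤ] Additive.ofMul (expUnit (-x))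
    + twoPiI ⊗ₜ[ℤ] Additive.ofMul (expUnit (-(z - x * y) / twoPiI))

lemma twoPiI_ne_zero : twoPiI ≠ 0 := by
  simp [twoPiI, Real.pi_ne_zero, Complex.I_ne_zero]

def expAddHom : ℂ →+ Additive ℂˣ :=
  AddMonoidHom.mk' (fun w => Additive.ofMul (expUnit w))
    fun a b => congrArg Additive.ofMul (Units.ext (Complex.exp_add a b))

lemma expAddHom_twoPiI_mul_intCast (k : ℤ) : expAddHom (twoPiI * k) = 0 :=
  congrArg Additive.ofMul <| Units.ext <| by
    simpa [expUnit, twoPiI, mul_comm] using Complex.exp_int_mul_two_pi_mul_I k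

lemma extClass_eq (x y z : ℂ) :
    extClass x y z = y ⊗ₜ[ℤ] expAddHom (-x) + twoPiI ⊗ₜ[ℤ] expAddHom (-(z - x * y) / twoPiI) :=
  rfl

lemma mul_intCast_tmul_expAddHom_neg_add_tmul_zsmul (r : ℂ) (k : ℤ) (x : ℂ) :
    (r * k) ⊗ₜ[ℤ] expAddHom (-x) + r ⊗ₜ[ℤ] expAddHom (k • x) = 0 := by
  have hk : r ⊗ₜ[ℤ] (k • expAddHom x) = (r * k) ⊗ₜ[ℤ] expAddHom x := by
    rw [mul_comm, ← zsmul_eq_mul]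
    exact (smul_tmul (R := ℤ) k r (expAddHom x)).symm
  rw [map_neg, map_zsmul, tmul_neg, hk, neg_add_cancel]

/-- `E(x,y,z)` is invariant under `(x,y,z) ↦ (x+m₁, y+n₁, z+m₁y+m₂)` with
`m₁, n₁ ∈ 2πiℤ` and `m₂ ∈ (2πi)²ℤ`. -/
theorem stmt17 (x y z m1 n1 m2 : ℂ)
    (hm1 : ∃ k : ℤ, m1 = twoPiI * k)
    (hn1 : ∃ k : ℤ, n1 = twoPiI * k)
    (hm2 : ∃ k : ℤ, m2 = twoPiI ^ 2 * k) :
    extClass (x + m1) (y + n1) (z + m1 * y + m2) = extClass x y z := by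
  obtain ⟨a, rfl⟩ := hm1
  obtain ⟨b, rfl⟩ := hn1
  obtain ⟨c, rfl⟩ := hm2
  have hx : -(x + twoPiI * a) = -x + twoPiI * (-a : ℤ) := by push_cast; ring
  have hz : -(z + twoPiI * a * y + twoPiI ^ 2 * c - (x + twoPiI * a) * (y + twoPiI * b)) / twoPiI
      = -(z - x * y) / twoPiI + b • x + twoPiI * (a * b - c : ℤ) := by
    have := twoPiI_ne_zero
    rw [zsmul_eq_mul]
    field_simp
    push_cast
    ring
  rw [extClass_eq, extClass_eq, hx, hz]
  simp only [map_add, expAddHom_twoPiI_mul_intCast, add_zero, add_tmul, tmul_add]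
  linear_combination (norm := abel) mul_intCast_tmul_expAddHom_neg_add_tmul_zsmul twoPiI b x

end
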